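/- Every element of G = C_m ≀ S_n has a unique representation as a product t_{n-1}^{k_{n-1}} t_{n-2}^{k_{n-2}} ... t_1^{k_1} t_0^{k_0} with 0 ≤ k_i < m(i+1) for all 0 ≤ i ≤ n-1, where t_i := s_i s_{i-1} ... s_1 s_0. -/

import Mathlib

open Finset

@[ext]
structure GenPerm (m n : ℕ) where
  σ : Equiv.Perm (Fin n)
  c : Fin n → ZMod m
deriving DecidableEq

namespace GenPerm

variable {m n : ℕ}

instance [NeZero m] : Fintype (GenPerm m n) :=
  Fintype.ofEquiv (Equiv.Perm (Fin n) × (Fin n → ZMod m))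
    { toFun := fun p => ⟨p.1, p.2⟩
      invFun := fun g => (g.σ, g.c)
      left_inv := fun p => rfl
      right_inv := fun g => rfl }

instance : Mul (GenPerm m n) := ⟨fun g h => ⟨g.σ * h.σ, fun j => g.c (h.σ j) + h.c j⟩⟩
instance : One (GenPerm m n) := ⟨⟨1, 0⟩⟩
instance : Inv (GenPerm m n) := ⟨fun g => ⟨g.σ⁻¹, fun j => - g.c (g.σ⁻¹ j)⟩⟩

@[simp] lemma mul_σ (g h : GenPerm m n) : (g * h).σ = g.σ * h.σ := rfl
@[simp] lemma mul_c (g h : GenPerm m n) (j : Fin n) : (g * h).c j = g.c (h.σ j) + h.c j := rfl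
@[simp] lemma one_σ : (1 : GenPerm m n).σ = 1 := rfl
@[simp] lemma one_c (j : Fin n) : (1 : GenPerm m n).c j = 0 := rfl
@[simp] lemma inv_σ (g : GenPerm m n) : (g⁻¹).σ = g.σ⁻¹ := rfl
@[simp] lemma inv_c (g : GenPerm m n) (j : Fin n) : (g⁻¹).c j = - g.c (g.σ⁻¹ j) := rfl

instance : Group (GenPerm m n) where
  mul_assoc a b c := by
    ext j
    · simp [mul_assoc]
    · simp [add_assoc]
  one_mul a := by
    ext j
    · simp
    · simp
  mul_one a := by
    ext j
    · simp
    · simp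
  inv_mul_cancel a := by
    ext j
    · simp
    · simp

/-- The generator `s i`: `s 0` multiplies the first letter's phase by `ω`;
for `1 ≤ i < n`, `s i` swaps positions `i` and `i+1` (1-indexed), i.e. `i-1` and `i`
(0-indexed). -/
def s (i : ℕ) : GenPerm m n :=
  if h : i < n then
    if h0 : i = 0 then ⟨1, fun j => if j = ⟨0, by omega⟩ then 1 else 0⟩
    else ⟨Equiv.swap ⟨i - 1, by omega⟩ ⟨i, h⟩, 0⟩
  else 1

/-- `t i = s i * s (i-1) * ⋯ * s 1 * s 0`. -/
def t (i : ℕ) : GenPerm m n := ((List.range (i + 1)).map (fun j => (s (i - j) : GenPerm m n))).prod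

/-- `rep k = t (n-1) ^ k (n-1) * ⋯ * t 0 ^ k 0`. -/
def rep (k : Fin n → ℕ) : GenPerm m n :=
  (List.ofFn (fun i : Fin n => (t (i : ℕ) : GenPerm m n) ^ k i)).reverse.prod

open scoped Classical in
/-- The flag major index: the sum of the exponents in the canonical representation
`π = t (n-1) ^ k (n-1) * ⋯ * t 0 ^ k 0` with `0 ≤ k i < m * (i+1)`. -/
noncomputable def flagMajor (π : GenPerm m n) : ℕ :=
  if h : ∃ k : Fin n → ℕ, (∀ i : Fin n, k i < m * ((i : ℕ) + 1)) ∧ π = rep k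
  then ∑ i, h.choose i else 0

/-- The major index of a generalized permutation with respect to the linear order
`1·ω^{m-1} < ⋯ < n·ω^{m-1} < ⋯ < 1·ω < ⋯ < n·ω < 1 < ⋯ < n`
(a 1-indexed descent at position `i` contributes `i`). -/
def majG (π : GenPerm m n) : ℕ :=
  ∑ i ∈ Finset.range n, if h : i + 1 < n then
    (if (π.c ⟨i, by omega⟩).val < (π.c ⟨i + 1, h⟩).val ∨
        (π.c ⟨i, by omega⟩ = π.c ⟨i + 1, h⟩ ∧ π.σ ⟨i + 1, h⟩ < π.σ ⟨i, by omega⟩)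
     then i + 1 else 0) else 0

/-- Coxeter length with respect to the generators `s 0, s 1, …, s (n-1)`. -/
noncomputable def len (π : GenPerm m n) : ℕ :=
  sInf {l | ∃ w : List (Fin n), w.length = l ∧ (w.map (fun i => (s (i : ℕ) : GenPerm m n))).prod = π}

/-! `t i` fixes every position above `i`, and on positions `0, …, i` it acts as the cycle
`i ↦ i - 1 ↦ ⋯ ↦ 0 ↦ i`, adding one unit of charge each time it wraps around. Hence a prefix
`t j ^ k j * ⋯ * t 0 ^ k 0` sends position `j` to `j - k j % (j + 1)` with charge `k j / (j + 1)`,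
which recovers `k j` when `k j < m (j + 1)`; peeling off the factors one at a time shows that the
exponent vectors in the box `k i < m (i + 1)` give pairwise distinct elements. The box has
`∏ m (i + 1) = n! m^n = |C_m ≀ S_n|` elements, so every element is reached. -/

lemma s_zero (hn : 0 < n) :
    (s 0 : GenPerm m n) = ⟨1, fun j => if j = ⟨0, hn⟩ then 1 else 0⟩ := by
  simp [s, hn]

lemma s_succ {i : ℕ} (hi : i + 1 < n) :
    (s (i + 1) : GenPerm m n) = ⟨Equiv.swap ⟨i, by omega⟩ ⟨i + 1, hi⟩, 0⟩ := by
  simp [s, hi]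

lemma t_zero : (t 0 : GenPerm m n) = s 0 := by
  simp [t]

lemma t_succ (i : ℕ) : (t (i + 1) : GenPerm m n) = s (i + 1) * t i := by
  rw [t, List.range_succ_eq_map, List.map_cons, List.prod_cons, List.map_map, t]
  congr 2
  exact List.map_congr_left fun a _ => congrArg s (by omega)

lemma t_σ_apply {i : ℕ} (hi : i < n) (x : Fin n) :
    (((t i : GenPerm m n).σ x : Fin n) : ℕ) =
      if (x : ℕ) = 0 then i else if x ≤ i then x - 1 else x := by
  induction i generalizing x with
  | zero =>
    rw [t_zero, s_zero hi]
    split_ifs <;> simp <;> omega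
  | succ i ih =>
    rw [t_succ, mul_σ, s_succ hi, Equiv.Perm.mul_apply, Equiv.swap_apply_def]
    have := ih (by omega) x
    split_ifs at this ⊢ <;> simp_all [Fin.ext_iff] <;> omega

lemma t_c_apply {i : ℕ} (hi : i < n) (x : Fin n) :
    (t i : GenPerm m n).c x = if (x : ℕ) = 0 then 1 else 0 := by
  induction i with
  | zero => simp [t_zero, s_zero hi, Fin.ext_iff]
  | succ i ih => simp [t_succ, s_succ hi, ih (by omega)]

def fixingFrom (j : ℕ) : Submonoid (GenPerm m n) where
  carrier := {g | ∀ x : Fin n, j ≤ x → g.σ x = x ∧ g.c x = 0}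
  mul_mem' {g h} hg hh x hx := by
    simp [(hh x hx).1, (hh x hx).2, (hg x hx).1, (hg x hx).2]
  one_mem' _ _ := ⟨rfl, rfl⟩

lemma fixingFrom_mono : Monotone (fixingFrom : ℕ → Submonoid (GenPerm m n)) :=
  fun _ _ hjk _ hg x hx => hg x (hjk.trans hx)

lemma t_mem_fixingFrom {i : ℕ} (hi : i < n) : (t i : GenPerm m n) ∈ fixingFrom (i + 1) := by
  intro x hx
  refine ⟨Fin.ext ?_, ?_⟩
  · rw [t_σ_apply hi]; split_ifs <;> omega
  · rw [t_c_apply hi, if_neg (by omega)]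

lemma mul_apply_of_mem_fixingFrom {j : ℕ} (hj : j < n) (a : GenPerm m n) {g : GenPerm m n}
    (hg : g ∈ fixingFrom j) :
    (a * g).σ ⟨j, hj⟩ = a.σ ⟨j, hj⟩ ∧ (a * g).c ⟨j, hj⟩ = a.c ⟨j, hj⟩ := by
  obtain ⟨hσ, hc⟩ := hg ⟨j, hj⟩ le_rfl
  simp [hσ, hc]

lemma t_pow_apply_self {i : ℕ} (hi : i < n) (k : ℕ) :
    (((t i : GenPerm m n) ^ k).σ ⟨i, hi⟩ : ℕ) = i - k % (i + 1) ∧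
      ((t i : GenPerm m n) ^ k).c ⟨i, hi⟩ = ((k / (i + 1) : ℕ) : ZMod m) := by
  induction k with
  | zero => simp
  | succ k ih =>
    obtain ⟨hσ, hc⟩ := ih
    have hdiv := Nat.div_add_mod k (i + 1)
    have hmod := Nat.mod_lt k (show 0 < i + 1 by omega)
    rw [pow_succ', mul_σ, mul_c, Equiv.Perm.mul_apply, t_σ_apply hi, t_c_apply hi, hσ, hc]
    rcases Nat.lt_or_ge (k % (i + 1)) i with hlt | hge
    · obtain ⟨hq, hr⟩ : (k + 1) / (i + 1) = k / (i + 1) ∧ (k + 1) % (i + 1) = k % (i + 1) + 1 :=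
        (Nat.div_mod_unique (by omega)).2 ⟨by linarith, by omega⟩
      have h0 : i - k % (i + 1) ≠ 0 := by omega
      simp only [h0, if_false, if_pos (show i - k % (i + 1) ≤ i by omega), hq, hr, zero_add,
        and_true]
      omega
    · obtain ⟨hq, hr⟩ : (k + 1) / (i + 1) = k / (i + 1) + 1 ∧ (k + 1) % (i + 1) = 0 :=
        (Nat.div_mod_unique (by omega)).2 ⟨by linarith, by omega⟩
      have h0 : i - k % (i + 1) = 0 := by omega
      simp only [h0, if_true, hq, hr, Nat.cast_succ]
      exact ⟨by omega, add_comm _ _⟩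

lemma eq_of_t_pow_apply_self_eq {i : ℕ} (hi : i < n) {k k' : ℕ} (hk : k < m * (i + 1))
    (hk' : k' < m * (i + 1))
    (hσ : ((t i : GenPerm m n) ^ k).σ ⟨i, hi⟩ = ((t i : GenPerm m n) ^ k').σ ⟨i, hi⟩)
    (hc : ((t i : GenPerm m n) ^ k).c ⟨i, hi⟩ = ((t i : GenPerm m n) ^ k').c ⟨i, hi⟩) :
    k = k' := by
  obtain ⟨hσk, hck⟩ := t_pow_apply_self (m := m) hi k
  obtain ⟨hσk', hck'⟩ := t_pow_apply_self (m := m) hi k'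
  have hr : k % (i + 1) = k' % (i + 1) := by
    have := congrArg Fin.val hσ
    have := Nat.mod_lt k (show 0 < i + 1 by omega)
    have := Nat.mod_lt k' (show 0 < i + 1 by omega)
    omega
  have hq : k / (i + 1) = k' / (i + 1) := by
    have hlt (l : ℕ) (hl : l < m * (i + 1)) : l / (i + 1) < m :=
      Nat.div_lt_of_lt_mul (by rwa [mul_comm])
    have := congrArg ZMod.val (hck.symm.trans (hc.trans hck'))
    rwa [ZMod.val_cast_of_lt (hlt k hk), ZMod.val_cast_of_lt (hlt k' hk')] at this
  rw [← Nat.div_add_mod k (i + 1), ← Nat.div_add_mod k' (i + 1), hq, hr]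

def repUpTo (j : ℕ) (k : ℕ → ℕ) : GenPerm m n :=
  ((List.range j).reverse.map fun i => (t i : GenPerm m n) ^ k i).prod

lemma repUpTo_succ (j : ℕ) (k : ℕ → ℕ) :
    (repUpTo (j + 1) k : GenPerm m n) = t j ^ k j * repUpTo j k := by
  simp [repUpTo, List.range_succ]

lemma repUpTo_mem_fixingFrom {j : ℕ} (hj : j ≤ n) (k : ℕ → ℕ) :
    (repUpTo j k : GenPerm m n) ∈ fixingFrom j := by
  induction j with
  | zero => exact Submonoid.one_mem _
  | succ j ih =>
    rw [repUpTo_succ]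
    exact Submonoid.mul_mem _ (Submonoid.pow_mem _ (t_mem_fixingFrom (by omega)) _)
      (fixingFrom_mono (Nat.le_succ j) (ih (by omega)))

lemma eq_of_repUpTo_eq {j : ℕ} (hj : j ≤ n) {k k' : ℕ → ℕ} (hk : ∀ i < j, k i < m * (i + 1))
    (hk' : ∀ i < j, k' i < m * (i + 1)) (h : (repUpTo j k : GenPerm m n) = repUpTo j k') :
    ∀ i < j, k i = k' i := by
  induction j with
  | zero => intro i hi; omega
  | succ j ih =>
    rw [repUpTo_succ, repUpTo_succ] at h
    have hjn : j < n := by omega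
    obtain ⟨hσ, hc⟩ := mul_apply_of_mem_fixingFrom hjn ((t j : GenPerm m n) ^ k j)
      (repUpTo_mem_fixingFrom (m := m) (by omega) k)
    obtain ⟨hσ', hc'⟩ := mul_apply_of_mem_fixingFrom hjn ((t j : GenPerm m n) ^ k' j)
      (repUpTo_mem_fixingFrom (m := m) (by omega) k')
    have hkj : k j = k' j := eq_of_t_pow_apply_self_eq hjn (hk j j.lt_succ_self)
      (hk' j j.lt_succ_self) (by rw [← hσ, ← hσ', h]) (by rw [← hc, ← hc', h])
    rw [hkj] at h
    have := ih (by omega) (fun i hi => hk i (by omega)) (fun i hi => hk' i (by omega))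
      (mul_left_cancel h)
    intro i hi
    rcases Nat.lt_succ_iff_lt_or_eq.1 hi with hi | rfl
    exacts [this i hi, hkj]

lemma rep_eq_repUpTo (k : Fin n → ℕ) :
    (rep k : GenPerm m n) = repUpTo n (fun i => if h : i < n then k ⟨i, h⟩ else 0) := by
  rw [rep, repUpTo, List.map_reverse, ← List.map_coe_finRange_eq_range, List.map_map,
    List.ofFn_eq_map]
  congr 3
  funext i
  simp

lemma rep_injOn : Set.InjOn (rep : (Fin n → ℕ) → GenPerm m n)
    {k | ∀ i : Fin n, k i < m * ((i : ℕ) + 1)} := by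
  intro k hk k' hk' h
  rw [rep_eq_repUpTo, rep_eq_repUpTo] at h
  have := eq_of_repUpTo_eq le_rfl (fun i hi => by simpa [hi] using hk ⟨i, hi⟩)
    (fun i hi => by simpa [hi] using hk' ⟨i, hi⟩) h
  funext i
  simpa using this i i.isLt

def equivProd : GenPerm m n ≃ Equiv.Perm (Fin n) × (Fin n → ZMod m) where
  toFun g := (g.σ, g.c)
  invFun p := ⟨p.1, p.2⟩

lemma card_eq : Nat.card (GenPerm m n) = n.factorial * m ^ n := by
  rw [Nat.card_congr equivProd, Nat.card_prod, Nat.card_perm, Nat.card_fun, Nat.card_zmod,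
    Nat.card_eq_fintype_card, Fintype.card_fin]

lemma card_flagExponents :
    Nat.card ((i : Fin n) → Fin (m * ((i : ℕ) + 1))) = n.factorial * m ^ n := by
  rw [Nat.card_pi]
  simp only [Nat.card_eq_fintype_card, Fintype.card_fin]
  rw [Finset.prod_mul_distrib, Fin.prod_univ_eq_prod_range (fun i => i + 1),
    Finset.prod_range_add_one_eq_factorial, Finset.prod_const, Finset.card_univ, Fintype.card_fin,
    mul_comm]

/-- every element of `C_m ≀ S_n` has a unique representation
`π = t_{n-1}^{k_{n-1}} ⋯ t_1^{k_1} t_0^{k_0}` with `0 ≤ k_i < m(i+1)`. -/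
theorem unique_flag_decomposition (m n : ℕ) (hm : 0 < m) (π : GenPerm m n) :
    ∃! k : Fin n → ℕ, (∀ i : Fin n, k i < m * ((i : ℕ) + 1)) ∧ π = rep k := by
  have : NeZero m := ⟨hm.ne'⟩
  let f : ((i : Fin n) → Fin (m * ((i : ℕ) + 1))) → GenPerm m n := fun k => rep fun i => k i
  have hf : f.Injective := fun a b h =>
    funext fun i => Fin.ext (congrFun (rep_injOn (fun i => (a i).isLt) (fun i => (b i).isLt) h) i)
  obtain ⟨k, rfl⟩ := ((Nat.bijective_iff_injective_and_card f).2
    ⟨hf, by rw [card_flagExponents, card_eq]⟩).2 π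
  exact ⟨fun i => k i, ⟨fun i => (k i).isLt, rfl⟩,
    fun k' hk' => rep_injOn hk'.1 (fun i => (k i).isLt) hk'.2.symm⟩

end GenPerm
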